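/- arXiv:2405.18072 — 2 statements merged into one kernel-verified Lean document; each statement's English description precedes it below -/
import Mathlib

section
/- Sufficient-funds invariant for sequential executions: let S = (τ_1, ..., τ_m) be a sequence of transfers such that for each k, the amount v(τ_k) satisfies v(τ_k) ≤ total(snd(τ_k), {τ_1,...,τ_{k-1}}). Then for every process j and every prefix length k, total(j, {τ_1,...,τ_k}) ≥ 0. -/
structure Transfer (P : Type) where
  snd : P
  amt : ℝ
  rcv : P
  sn : ℕ

noncomputable instance {P : Type} [DecidableEq P] : DecidableEq (Transfer P) :=
  Classical.decEq _

noncomputable def total {P : Type} [DecidableEq P] (init : P → ℝ) (j : P)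
    (O : Finset (Transfer P)) : ℝ :=
  init j + ∑ τ ∈ O.filter (fun τ => τ.rcv = j), τ.amt
         - ∑ τ ∈ O.filter (fun τ => τ.snd = j), τ.amt

noncomputable def totalL {P : Type} [DecidableEq P] (init : P → ℝ) (j : P)
    (l : List (Transfer P)) : ℝ :=
  init j + ((l.filter (fun τ => τ.rcv = j)).map Transfer.amt).sum
         - ((l.filter (fun τ => τ.snd = j)).map Transfer.amt).sum

/-! Balances stay nonnegative one transfer at a time: a transfer of `v ≥ 0` only raises the
receiver's balance, and lowers the sender's by `v`, which the funding condition bounds by the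
sender's current balance. Induction along the prefixes of the sequence does the rest. -/

section

variable {P : Type} [DecidableEq P] (init : P → ℝ)

theorem totalL_nil (j : P) : totalL init j [] = init j := by
  simp [totalL]

theorem totalL_concat (j : P) (s : List (Transfer P)) (τ : Transfer P) :
    totalL init j (s ++ [τ]) = totalL init j s
      + (if τ.rcv = j then τ.amt else 0) - (if τ.snd = j then τ.amt else 0) := by
  simp only [totalL, List.filter_append, List.map_append, List.sum_append, List.filter_cons,
    List.filter_nil]
  by_cases hrcv : τ.rcv = j <;> by_cases hsnd : τ.snd = j <;> simp [hrcv, hsnd] <;> ring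

theorem totalL_concat_nonneg {s : List (Transfer P)} {τ : Transfer P}
    (hs : ∀ j, 0 ≤ totalL init j s) (hτ : 0 ≤ τ.amt) (hfund : τ.amt ≤ totalL init τ.snd s)
    (j : P) : 0 ≤ totalL init j (s ++ [τ]) := by
  have hgain : 0 ≤ if τ.rcv = j then τ.amt else 0 := by split_ifs <;> simp [hτ]
  rw [totalL_concat]
  by_cases hsnd : τ.snd = j
  · rw [if_pos hsnd]
    subst hsnd
    linarith
  · rw [if_neg hsnd]
    linarith [hs j]

end

theorem sufficient_funds_invariant {P : Type} [DecidableEq P] (init : P → ℝ)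
    (l : List (Transfer P))
    (hinit : ∀ j, 0 ≤ init j)
    (hamt : ∀ τ ∈ l, 0 ≤ τ.amt)
    (hfund : ∀ k (hk : k < l.length),
      (l.get ⟨k, hk⟩).amt ≤ totalL init (l.get ⟨k, hk⟩).snd (l.take k)) :
    ∀ j k, 0 ≤ totalL init j (l.take k) := by
  intro j k
  induction k generalizing j with
  | zero => simpa [totalL_nil] using hinit j
  | succ k ih =>
    rcases lt_or_ge k l.length with hk | hk
    · rw [← List.take_concat_get' l k hk]
      exact totalL_concat_nonneg init ih (hamt _ (List.getElem_mem hk)) (hfund k hk) j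
    · have hstable : l.take (k + 1) = l.take k := by
        rw [List.take_of_length_le hk, List.take_of_length_le (by omega)]
      exact hstable ▸ ih j
end

section
/- A union of two acyclic binary relations R1 ∪ R2 on a set X is acyclic provided: R1 is acyclic, R2 is acyclic, and every path of the form a R2 b R1 c can be replaced by a R1 c (i.e., a R2 b and b R1 c implies a R1 c). More precisely, under this absorption condition, R1 ∪ R2 has no cycles. -/
theorem union_acyclic {X : Type} (R1 R2 : X → X → Prop)
    (h1 : ∀ x, ¬ Relation.TransGen R1 x x)
    (h2 : ∀ x, ¬ Relation.TransGen R2 x x)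
    (habs : ∀ a b c, R2 a b → R1 b c → R1 a c)
    (hbip : ¬ ∃ a b c, R2 a b ∧ R2 b c) :
    ∀ x, ¬ Relation.TransGen (fun a b => R1 a b ∨ R2 a b) x x := by
  have key : ∀ x y, Relation.TransGen (fun a b => R1 a b ∨ R2 a b) x y →
      Relation.TransGen R1 x y ∨ R2 x y ∨ ∃ z, Relation.TransGen R1 x z ∧ R2 z y := by
    intro x y h
    induction h with
    | single e =>
      rcases e with e | e
      · exact Or.inl (Relation.TransGen.single e)
      · exact Or.inr (Or.inl e)
    | tail _ e ih =>
      rename_i b y _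
      rcases ih with ih | ih | ⟨z, hz1, hz2⟩
      · rcases e with e | e
        · exact Or.inl (ih.tail e)
        · exact Or.inr (Or.inr ⟨b, ih, e⟩)
      · rcases e with e | e
        · exact Or.inl (Relation.TransGen.single (habs _ _ _ ih e))
        · exact absurd ⟨x, b, y, ih, e⟩ hbip
      · rcases e with e | e
        · exact Or.inl (hz1.tail (habs _ _ _ hz2 e))
        · exact absurd ⟨z, b, y, hz2, e⟩ hbip
  intro x h
  rcases key x x h with h' | h' | ⟨z, hz1, hz2⟩
  · exact h1 x h'
  · exact h2 x (Relation.TransGen.single h')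
  · rcases Relation.TransGen.head'_iff.mp hz1 with ⟨w, e, hw⟩
    exact h1 z (Relation.TransGen.head' (habs _ _ _ hz2 e) hw)
end
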